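/- arXiv:0803.2484 — 3 statements merged into one kernel-verified Lean document; each statement's English description precedes it below -/
import Mathlib

section
/- The group with presentation ⟨a, b, c | aba⁻¹ = b², bcb⁻¹ = c², cac⁻¹ = a²⟩ is the trivial group. -/
/-!
A relation `x y x⁻¹ = y²` lets one move powers of `y` past `x⁻¹` at the cost of doubling the
exponent, `yⁿ x⁻¹ = x⁻¹ y²ⁿ`, so words in `x⁻¹` and `y` can be brought to the form `x⁻ᵐ yᵏ`.
Conjugating `b⁻¹ a b = b a` (a consequence of the first relation) by `c` and using the other
two relations gives `(b a)⁴ = c⁻¹ b a²`, which puts `c` into the subgroup generated by `a` and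
`b`: `c = a⁻² b⁻¹¹`. Substituting this into `b c b⁻¹ = c²` gives `a² = b⁻⁴⁷`. As `a²` commutes
with `a`, conjugating by `a` gives `b⁻⁴⁷ = b⁻⁹⁴`, so `b⁴⁷ = 1 = a²`; then `b = a² b a⁻² = b⁴`,
so `b³ = 1` and `b = 1`. Finally `c = a⁻² = 1` and `a = c a c⁻¹ = a² = 1`.
-/

section BaumslagSolitar

variable {G : Type*} [Group G] {x y : G}

theorem conj_zpow_of_conj_eq_sq (h : x * y * x⁻¹ = y ^ 2) (n : ℤ) :
    x * y ^ n * x⁻¹ = y ^ (2 * n) := by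
  rw [← conj_zpow, h, ← zpow_natCast, ← zpow_mul, Nat.cast_ofNat]

theorem zpow_mul_inv_of_conj_eq_sq (h : x * y * x⁻¹ = y ^ 2) (n : ℤ) :
    y ^ n * x⁻¹ = x⁻¹ * y ^ (2 * n) := by
  rw [← conj_zpow_of_conj_eq_sq h]
  group

theorem zpow_mul_zpow_neg_two_of_conj_eq_sq (h : x * y * x⁻¹ = y ^ 2) (n : ℤ) :
    y ^ n * x ^ (-2 : ℤ) = x ^ (-2 : ℤ) * y ^ (4 * n) := by
  calc y ^ n * x ^ (-2 : ℤ) = y ^ n * x⁻¹ * x⁻¹ := by group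
    _ = x⁻¹ * (y ^ (2 * n) * x⁻¹) := by rw [zpow_mul_inv_of_conj_eq_sq h]; group
    _ = x ^ (-2 : ℤ) * y ^ (4 * n) := by
      rw [zpow_mul_inv_of_conj_eq_sq h, ← mul_assoc, ← mul_assoc]; group

theorem conj_eq_inv_mul_of_conj_eq_sq (h : x * y * x⁻¹ = y ^ 2) :
    y * x * y⁻¹ = y⁻¹ * x := by
  calc y * x * y⁻¹ = y⁻¹ * (y ^ 2 * x) * y⁻¹ := by group
    _ = y⁻¹ * x := by rw [← h]; group

theorem mul_sq_mul_inv_pow_four_of_conj_eq_sq (h : x * y * x⁻¹ = y ^ 2) :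
    y * x ^ 2 * ((y * x) ^ 4)⁻¹ = x ^ (-2 : ℤ) * y ^ (-11 : ℤ) := by
  calc y * x ^ 2 * ((y * x) ^ 4)⁻¹
      = y * x * y⁻¹ * x⁻¹ * y⁻¹ * x⁻¹ * y⁻¹ * x⁻¹ * y⁻¹ := by
        simp only [pow_succ, pow_zero, one_mul]; group
    _ = y ^ (-2 : ℤ) * x⁻¹ * y⁻¹ * x⁻¹ * y⁻¹ := by
        rw [conj_eq_inv_mul_of_conj_eq_sq h]; group
    _ = x⁻¹ * (y ^ (-5 : ℤ) * x⁻¹) * y⁻¹ := by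
        rw [zpow_mul_inv_of_conj_eq_sq h]; group
    _ = x ^ (-2 : ℤ) * y ^ (-11 : ℤ) := by
        rw [zpow_mul_inv_of_conj_eq_sq h]; group

theorem conj_zpow_neg_two_mul_zpow_of_conj_eq_sq (h : x * y * x⁻¹ = y ^ 2) (m : ℤ) :
    y * (x ^ (-2 : ℤ) * y ^ m) * y⁻¹ = x ^ (-2 : ℤ) * y ^ (m + 3) := by
  calc y * (x ^ (-2 : ℤ) * y ^ m) * y⁻¹ = y ^ (1 : ℤ) * x ^ (-2 : ℤ) * y ^ (m - 1) := by group
    _ = x ^ (-2 : ℤ) * y ^ (m + 3) := by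
      rw [zpow_mul_zpow_neg_two_of_conj_eq_sq h, mul_assoc, ← zpow_add]; ring_nf

theorem sq_zpow_neg_two_mul_zpow_of_conj_eq_sq (h : x * y * x⁻¹ = y ^ 2) (m : ℤ) :
    (x ^ (-2 : ℤ) * y ^ m) ^ 2 = x ^ (-4 : ℤ) * y ^ (5 * m) := by
  calc (x ^ (-2 : ℤ) * y ^ m) ^ 2 = x ^ (-2 : ℤ) * (y ^ m * x ^ (-2 : ℤ)) * y ^ m := by
        rw [sq]; group
    _ = x ^ (-4 : ℤ) * y ^ (5 * m) := by
      rw [zpow_mul_zpow_neg_two_of_conj_eq_sq h]; group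

theorem zpow_eq_one_of_sq_eq_zpow_of_conj_eq_sq (h : x * y * x⁻¹ = y ^ 2) {k : ℤ}
    (hk : x ^ 2 = y ^ k) : y ^ k = 1 := by
  have : y ^ (2 * k) = y ^ k := by rw [← conj_zpow_of_conj_eq_sq h, ← hk]; group
  rw [two_mul, zpow_add] at this
  exact mul_eq_left.mp this

theorem pow_three_eq_one_of_sq_eq_one_of_conj_eq_sq (h : x * y * x⁻¹ = y ^ 2)
    (hx : x ^ 2 = 1) : y ^ 3 = 1 := by
  have : y = y ^ 4 := by
    calc y = x ^ 2 * y * (x ^ 2)⁻¹ := by rw [hx]; group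
      _ = x * (x * y * x⁻¹) * x⁻¹ := by rw [sq]; group
      _ = y ^ 4 := by rw [h, ← conj_pow, h, ← pow_mul]
  calc y ^ 3 = y ^ 4 * y⁻¹ := by group
    _ = 1 := by rw [← this, mul_inv_cancel]

theorem sq_eq_one_and_eq_one_of_sq_eq_zpow_of_conj_eq_sq (h : x * y * x⁻¹ = y ^ 2) {k : ℤ}
    (hk : x ^ 2 = y ^ k) (hcop : IsCoprime k 3) : x ^ 2 = 1 ∧ y = 1 := by
  have hyk := zpow_eq_one_of_sq_eq_zpow_of_conj_eq_sq h hk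
  have hx : x ^ 2 = 1 := hk.trans hyk
  have hy3 : y ^ (3 : ℤ) = 1 := by
    exact_mod_cast pow_three_eq_one_of_sq_eq_one_of_conj_eq_sq h hx
  obtain ⟨u, v, huv⟩ := hcop
  refine ⟨hx, ?_⟩
  calc y = y ^ (u * k + v * 3) := by rw [huv, zpow_one]
    _ = 1 := by rw [zpow_add, mul_comm u, mul_comm v, zpow_mul, zpow_mul, hyk, hy3]; simp

end BaumslagSolitar

namespace Brown

variable {G : Type*} [Group G] {a b c : G}

theorem mul_pow_four_eq (h₁ : a * b * a⁻¹ = b ^ 2) (h₂ : b * c * b⁻¹ = c ^ 2)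
    (h₃ : c * a * c⁻¹ = a ^ 2) : (b * a) ^ 4 = c⁻¹ * b * a ^ 2 := by
  have hba : b⁻¹ * a * b = b * a := by
    rw [← conj_eq_inv_mul_of_conj_eq_sq h₁]; group
  have hcb := conj_eq_inv_mul_of_conj_eq_sq h₂
  calc (b * a) ^ 4 = b⁻¹ * a ^ 4 * b := by
        rw [← hba]; simpa using conj_pow (a := b⁻¹) (b := a) (i := 4)
    _ = b⁻¹ * (c * a ^ 2 * c⁻¹) * b := by rw [← conj_pow, h₃, ← pow_mul]
    _ = (c * b * c⁻¹)⁻¹ * (c * a * c⁻¹) * (c * b * c⁻¹) := by rw [hcb, h₃]; group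
    _ = c * (b⁻¹ * a * b) * c⁻¹ := by group
    _ = (c * b * c⁻¹) * (c * a * c⁻¹) := by rw [hba]; group
    _ = c⁻¹ * b * a ^ 2 := by rw [hcb, h₃]

theorem eq_zpow_mul_zpow (h₁ : a * b * a⁻¹ = b ^ 2) (h₂ : b * c * b⁻¹ = c ^ 2)
    (h₃ : c * a * c⁻¹ = a ^ 2) : c = a ^ (-2 : ℤ) * b ^ (-11 : ℤ) := by
  rw [← mul_sq_mul_inv_pow_four_of_conj_eq_sq h₁, mul_pow_four_eq h₁ h₂ h₃]
  group

theorem sq_eq_zpow (h₁ : a * b * a⁻¹ = b ^ 2) (h₂ : b * c * b⁻¹ = c ^ 2)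
    (h₃ : c * a * c⁻¹ = a ^ 2) : a ^ 2 = b ^ (-47 : ℤ) := by
  have h₂' := h₂
  rw [eq_zpow_mul_zpow h₁ h₂ h₃, conj_zpow_neg_two_mul_zpow_of_conj_eq_sq h₁,
    sq_zpow_neg_two_mul_zpow_of_conj_eq_sq h₁] at h₂'
  calc a ^ 2 = a ^ (4 : ℤ) * (a ^ (-2 : ℤ) * b ^ (-11 + 3 : ℤ)) * b ^ (8 : ℤ) := by group
    _ = b ^ (-47 : ℤ) := by rw [h₂']; group

theorem eq_one (h₁ : a * b * a⁻¹ = b ^ 2) (h₂ : b * c * b⁻¹ = c ^ 2)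
    (h₃ : c * a * c⁻¹ = a ^ 2) : a = 1 ∧ b = 1 ∧ c = 1 := by
  obtain ⟨ha, hb⟩ := sq_eq_one_and_eq_one_of_sq_eq_zpow_of_conj_eq_sq h₁
    (sq_eq_zpow h₁ h₂ h₃) (by norm_num [Int.isCoprime_iff_gcd_eq_one])
  have hc : c = 1 := by
    rw [eq_zpow_mul_zpow h₁ h₂ h₃, hb, one_zpow, mul_one, zpow_neg, zpow_ofNat, ha, inv_one]
  refine ⟨?_, hb, hc⟩
  rw [← ha, ← h₃, hc]
  group

end Brown

def FreeGroup.conjSqRelator {α : Type*} (i j : α) : FreeGroup α :=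
  of i * of j * (of i)⁻¹ * (of j * of j)⁻¹

namespace PresentedGroup

theorem of_mul_of_mul_inv_eq_sq {α : Type*} {rels : Set (FreeGroup α)} {i j : α}
    (h : FreeGroup.conjSqRelator i j ∈ rels) :
    (of i : PresentedGroup rels) * of j * (of i)⁻¹ = of j ^ 2 := by
  have hmk := mk_eq_mk_of_mul_inv_mem h
  simp only [map_mul, map_inv] at hmk
  rw [sq]
  exact hmk

theorem eq_one_of_brown_relators {rels : Set (FreeGroup (Fin 3))}
    (h₀₁ : FreeGroup.conjSqRelator 0 1 ∈ rels) (h₁₂ : FreeGroup.conjSqRelator 1 2 ∈ rels)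
    (h₂₀ : FreeGroup.conjSqRelator 2 0 ∈ rels) (x : PresentedGroup rels) : x = 1 := by
  obtain ⟨h₀, h₁, h₂⟩ := Brown.eq_one (of_mul_of_mul_inv_eq_sq h₀₁)
    (of_mul_of_mul_inv_eq_sq h₁₂) (of_mul_of_mul_inv_eq_sq h₂₀)
  refine Subgroup.mem_bot.mp (generated_by rels ⊥ (fun i => ?_) x)
  fin_cases i
  exacts [h₀, h₁, h₂]

end PresentedGroup

/-- K. Brown's example: the group ⟨a, b, c | aba⁻¹ = b², bcb⁻¹ = c², cac⁻¹ = a²⟩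
is the trivial group. -/
theorem brown_triangle_group_trivial :
    ∀ x : PresentedGroup
      (({FreeGroup.of 0 * FreeGroup.of 1 * (FreeGroup.of 0)⁻¹ *
            (FreeGroup.of 1 * FreeGroup.of 1)⁻¹,
         FreeGroup.of 1 * FreeGroup.of 2 * (FreeGroup.of 1)⁻¹ *
            (FreeGroup.of 2 * FreeGroup.of 2)⁻¹,
         FreeGroup.of 2 * FreeGroup.of 0 * (FreeGroup.of 2)⁻¹ *
            (FreeGroup.of 0 * FreeGroup.of 0)⁻¹} : Set (FreeGroup (Fin 3)))),
      x = 1 :=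
  PresentedGroup.eq_one_of_brown_relators (Set.mem_insert _ _)
    (Set.mem_insert_of_mem _ (Set.mem_insert _ _))
    (Set.mem_insert_of_mem _ (Set.mem_insert_of_mem _ rfl))
end

section
/- If Γ is a countable group with Kazhdan's Property (T), then Γ is finitely generated. -/
/-- A discrete group has Kazhdan's Property (T) if every unitary representation of it
on a complex Hilbert space with almost-invariant vectors has a nonzero invariant
vector. -/
def HasPropertyT (Γ : Type*) [Group Γ] : Prop :=
  ∀ (H : Type) (_ : NormedAddCommGroup H) (_ : InnerProductSpace ℂ H)
    (_ : CompleteSpace H) (ρ : Γ →* (H ≃ₗᵢ[ℂ] H)),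
    (∀ (S : Finset Γ) (ε : ℝ), 0 < ε →
      ∃ v : H, ‖v‖ = 1 ∧ ∀ g ∈ S, ‖ρ g v - v‖ < ε) →
    ∃ v : H, v ≠ 0 ∧ ∀ g : Γ, ρ g v = v

/-!
Let `Γ` act on the disjoint union `X` of the coset spaces `Γ ⧸ ⟨S⟩`, `S` ranging over the finite
subsets of `Γ`. For each finite `S`, the indicator of the point `⟨S⟩ ∈ Γ ⧸ ⟨S⟩` is a unit vector
of `ℓ²(X)` fixed by `S`, so Property (T) yields a nonzero invariant vector `v`. Since `v` is
constant on orbits and square-summable, the orbit of a point where `v` does not vanish is finite;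
that orbit is a whole coset space `Γ ⧸ ⟨S⟩`, so the finitely generated subgroup `⟨S⟩` has finite
index and `Γ` is generated by `S` together with a set of coset representatives.
-/

open scoped ENNReal

section Reindex

variable {α β : Type*} {E : Type*} [NormedAddCommGroup E] {p : ℝ≥0∞}

theorem Memℓp.comp_equiv {f : β → E} (hf : Memℓp f p) (e : α ≃ β) : Memℓp (f ∘ e) p := by
  rcases p.trichotomy with rfl | rfl | hp
  · rw [memℓp_zero_iff] at hf ⊢
    exact hf.preimage e.injective.injOn
  · rw [memℓp_infty_iff] at hf ⊢
    rwa [← e.surjective.range_comp (fun i => ‖f i‖)] at hf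
  · rw [memℓp_gen_iff hp] at hf ⊢
    exact e.summable_iff.2 hf

theorem Memℓp.finite_setOf_le_norm {f : α → E} (hf : Memℓp f p) (hp : p ≠ ∞) {c : ℝ}
    (hc : 0 < c) : {i | c ≤ ‖f i‖}.Finite := by
  rcases eq_or_ne p 0 with rfl | hp₀
  · refine (memℓp_zero_iff.1 hf).subset fun i hi => ?_
    exact norm_pos_iff.1 (hc.trans_le hi)
  have hp' : 0 < p.toReal := ENNReal.toReal_pos hp₀ hp
  have hsmall : ∀ᶠ i in Filter.cofinite, ‖f i‖ ^ p.toReal < c ^ p.toReal :=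
    ((memℓp_gen_iff hp').1 hf).tendsto_cofinite_zero.eventually
      (eventually_lt_nhds (Real.rpow_pos_of_pos hc _))
  refine (Filter.eventually_cofinite.1 hsmall).subset fun i hi => ?_
  exact not_lt.2 (Real.rpow_le_rpow hc.le hi hp'.le)

variable (𝕜 : Type*) [NormedField 𝕜] [NormedSpace 𝕜 E] [Fact (1 ≤ p)]

noncomputable def lp.compEquiv (e : α ≃ β) :
    lp (fun _ : β => E) p ≃ₗᵢ[𝕜] lp (fun _ : α => E) p where
  toFun f := ⟨f ∘ e, (lp.memℓp f).comp_equiv e⟩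
  invFun f := ⟨f ∘ e.symm, (lp.memℓp f).comp_equiv e.symm⟩
  left_inv f := by ext i; simp
  right_inv f := by ext i; simp
  map_add' f g := rfl
  map_smul' c f := rfl
  norm_map' f := by
    rcases p.dichotomy with rfl | hp
    · simp only [lp.norm_eq_ciSup]
      exact e.iSup_comp (g := fun i => ‖f i‖)
    · have hp' : 0 < p.toReal := zero_lt_one.trans_le hp
      simp only [lp.norm_eq_tsum_rpow hp']
      exact congrArg (· ^ (1 / p.toReal)) (e.tsum_eq fun i => ‖f i‖ ^ p.toReal)

@[simp] theorem lp.compEquiv_apply (e : α ≃ β) (f : lp (fun _ : β => E) p) (i : α) :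
    lp.compEquiv 𝕜 e f i = f (e i) := rfl

end Reindex

section PermRep

variable (G 𝕜 : Type*) {X E : Type*} [Group G] [MulAction G X] [NormedField 𝕜]
  [NormedAddCommGroup E] [NormedSpace 𝕜 E] {p : ℝ≥0∞} [Fact (1 ≤ p)]

noncomputable def lp.permRep : G →* (lp (fun _ : X => E) p ≃ₗᵢ[𝕜] lp (fun _ : X => E) p) where
  toFun g := lp.compEquiv 𝕜 (MulAction.toPerm g⁻¹)
  map_one' := by ext f x; simp
  map_mul' g h := by ext f x; simp [mul_smul]

variable {G 𝕜}

@[simp] theorem lp.permRep_apply (g : G) (f : lp (fun _ : X => E) p) (x : X) :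
    lp.permRep G 𝕜 g f x = f (g⁻¹ • x) := rfl

theorem lp.permRep_single [DecidableEq X] (g : G) (x : X) (a : E) :
    lp.permRep G 𝕜 g (lp.single (E := fun _ => E) p x a) = lp.single p (g • x) a := by
  ext y
  simp only [lp.permRep_apply, lp.single_apply, Pi.single_apply, inv_smul_eq_iff]

theorem lp.apply_smul_eq_of_forall_permRep_eq {v : lp (fun _ : X => E) p}
    (hv : ∀ g, lp.permRep G 𝕜 g v = v) (g : G) (x : X) : v (g • x) = v x := by
  simpa using congrArg (fun w : lp (fun _ : X => E) p => w (g • x)) (hv g).symm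

theorem lp.finite_orbit_of_forall_permRep_eq (hp : p ≠ ∞) {v : lp (fun _ : X => E) p}
    (hv : ∀ g, lp.permRep G 𝕜 g v = v) {x : X} (hx : v x ≠ 0) :
    (MulAction.orbit G x).Finite := by
  refine ((lp.memℓp v).finite_setOf_le_norm hp (norm_pos_iff.2 hx)).subset ?_
  rintro _ ⟨g, rfl⟩
  exact (congrArg norm (lp.apply_smul_eq_of_forall_permRep_eq hv g x)).ge

end PermRep

theorem Subgroup.eq_top_of_le_of_range_out_subset {G : Type*} [Group G] {H K : Subgroup G}
    (hHK : H ≤ K) (hK : Set.range (Quotient.out : G ⧸ H → G) ⊆ K) : K = ⊤ := by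
  refine eq_top_iff.2 fun g _ => ?_
  obtain ⟨h, hh⟩ := QuotientGroup.mk_out_eq_mul H g
  have hout : (g : G ⧸ H).out ∈ K := hK ⟨_, rfl⟩
  rw [hh] at hout
  simpa using mul_mem hout (hHK (inv_mem h.2))

theorem Group.fg_of_fg_of_finite_quotient {G : Type*} [Group G] {H : Subgroup G}
    [Finite (G ⧸ H)] (hH : H.FG) : Group.FG G := by
  classical
  obtain ⟨S, rfl⟩ := hH
  let T := (Set.finite_range (Quotient.out : G ⧸ Subgroup.closure (S : Set G) → G)).toFinset
  refine ⟨⟨S ∪ T, Subgroup.eq_top_of_le_of_range_out_subset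
    (H := Subgroup.closure (S : Set G)) (Subgroup.closure_mono ?_) ?_⟩⟩
  · simp
  · exact fun g hg => Subgroup.subset_closure (by simp [T, hg])

theorem MulAction.finite_of_finite_orbit_sigma_mk {G ι : Type*} {α : ι → Type*} [Group G]
    [∀ i, MulAction G (α i)] [∀ i, IsPretransitive G (α i)] {i : ι} {b : α i}
    (h : (orbit G (⟨i, b⟩ : Σ i, α i)).Finite) : Finite (α i) := by
  refine Set.finite_univ_iff.1 ((h.preimage sigma_mk_injective.injOn).subset fun d _ => ?_)
  obtain ⟨g, rfl⟩ := exists_smul_eq G b d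
  exact ⟨g, rfl⟩

abbrev FinsetClosureCosets (Γ : Type*) [Group Γ] :=
  Σ S : Finset Γ, Γ ⧸ Subgroup.closure (S : Set Γ)

theorem FinsetClosureCosets.smul_mk_one {Γ : Type*} [Group Γ] {S : Finset Γ} {g : Γ}
    (hg : g ∈ S) :
    g • (⟨S, ((1 : Γ) : Γ ⧸ _)⟩ : FinsetClosureCosets Γ) = ⟨S, ((1 : Γ) : Γ ⧸ _)⟩ := by
  rw [Sigma.smul_mk, MulAction.Quotient.smul_mk, smul_eq_mul, mul_one]
  exact congrArg (Sigma.mk S) (QuotientGroup.eq.2 (by simpa using Subgroup.subset_closure hg))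

theorem FinsetClosureCosets.exists_norm_eq_one_forall_mem_permRep_eq {Γ : Type*} [Group Γ]
    (S : Finset Γ) : ∃ v : lp (fun _ : FinsetClosureCosets Γ => ℂ) 2,
      ‖v‖ = 1 ∧ ∀ g ∈ S, lp.permRep Γ ℂ g v = v := by
  classical
  refine ⟨lp.single 2 ⟨S, ((1 : Γ) : Γ ⧸ _)⟩ 1, ?_, fun g hg => ?_⟩
  · simp [lp.norm_single]
  · rw [lp.permRep_single, smul_mk_one hg]

theorem propertyT_implies_finitely_generated_general (Γ : Type) [Group Γ]
    (hT : HasPropertyT Γ) :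
    ∃ S : Finset Γ, Subgroup.closure (S : Set Γ) = ⊤ := by
  obtain ⟨v, hv0, hv⟩ := hT (lp (fun _ : FinsetClosureCosets Γ => ℂ) 2) _ _ inferInstance
    (lp.permRep Γ ℂ) fun S ε hε => by
      obtain ⟨w, hw1, hw⟩ := FinsetClosureCosets.exists_norm_eq_one_forall_mem_permRep_eq S
      exact ⟨w, hw1, fun g hg => by simpa [hw g hg] using hε⟩
  obtain ⟨⟨S, c⟩, hc⟩ : ∃ x, v x ≠ 0 := by
    by_contra! h
    exact hv0 (lp.ext (funext h))
  have : Finite (Γ ⧸ Subgroup.closure (S : Set Γ)) :=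
    MulAction.finite_of_finite_orbit_sigma_mk
      (α := fun S : Finset Γ => Γ ⧸ Subgroup.closure (S : Set Γ))
      (lp.finite_orbit_of_forall_permRep_eq ENNReal.ofNat_ne_top hv hc)
  exact (Group.fg_of_fg_of_finite_quotient ⟨S, rfl⟩).out

/-- A countable group with Kazhdan's Property (T) is finitely generated. -/
theorem propertyT_implies_finitely_generated (Γ : Type) [Group Γ] [Countable Γ]
    (hT : HasPropertyT Γ) :
    ∃ S : Finset Γ, Subgroup.closure (S : Set Γ) = ⊤ :=
  propertyT_implies_finitely_generated_general Γ hT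
end

section
/- Let Γ act on a set X of cells with finite stabilizers, and suppose Γ' ≤ Γ has finite index d. If A is a set of orbit representatives for Γ on X and A' for Γ', then Σ_{v∈A'} 1/|Γ'_v| = d · Σ_{v∈A} 1/|Γ_v|. In particular, Serre's covolume sum is multiplicative in the index of subgroups. -/
/-!
Send a pair `(gH, b)`, with `b` a representative of a `G`-orbit, to the representative of the
`H`-orbit of `g⁻¹ • b`. The fibre over `a'` is a translate of the image of `G_{a'}` in `G ⧸ H`,
so it has `[G_{a'} : H_{a'}] = |G_{a'}| / |H_{a'}|` elements, each with `G`-stabilizer of size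
`|G_{a'}|`. Summing `1 / |G_b|` over all pairs fibre by fibre therefore gives
`Σ_{a'} 1 / |H_{a'}|`, while summing over the cosets first gives `[G : H] · Σ_b 1 / |G_b|`.
The computation is done in `ℝ≥0∞`, where sums can be rearranged freely.
-/

open MulAction
open scoped ENNReal Pointwise

theorem ENNReal.natCast_mul_inv_eq_inv_of_mul_eq {q m n : ℕ} (h : q * m = n) (hn : n ≠ 0) :
    (q : ℝ≥0∞) * (n : ℝ≥0∞)⁻¹ = (m : ℝ≥0∞)⁻¹ := by
  subst h
  have hq : (q : ℝ≥0∞) ≠ 0 := by exact_mod_cast left_ne_zero_of_mul hn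
  rw [Nat.cast_mul, ENNReal.mul_inv (Or.inl hq) (Or.inl (ENNReal.natCast_ne_top q)), ← mul_assoc,
    ENNReal.mul_inv_cancel hq (ENNReal.natCast_ne_top q), one_mul]

theorem ENNReal.toReal_tsum_inv_natCast {ι : Type*} {f : ι → ℕ} (hf : ∀ i, f i ≠ 0) :
    (∑' i, (f i : ℝ≥0∞)⁻¹).toReal = ∑' i, (1 : ℝ) / f i := by
  rw [ENNReal.tsum_toReal_eq fun i => ENNReal.inv_ne_top.mpr (by exact_mod_cast hf i)]
  simp [one_div]

theorem ENat.toReal_toENNReal_card (α : Type*) : (ENat.card α : ℝ≥0∞).toReal = Nat.card α := by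
  rcases finite_or_infinite α with hα | hα
  · simp [ENat.card_eq_coe_natCard]
  · simp

namespace MulAction

section Transversal

variable (M : Type*) {X : Type*} [Monoid M] [MulAction M X]

def IsOrbitTransversal (A : Set X) : Prop :=
  ∀ x : X, ∃! a, a ∈ A ∧ a ∈ orbit M x

variable {M} {A : Set X} (hA : IsOrbitTransversal M A)

noncomputable def transversalRep (x : X) : A :=
  ⟨(hA x).choose, (hA x).choose_spec.1.1⟩

theorem transversalRep_eq_iff {x : X} {a : A} :
    transversalRep hA x = a ↔ (a : X) ∈ orbit M x := by
  refine ⟨fun h => h ▸ (hA x).choose_spec.1.2, fun h => Subtype.ext ?_⟩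
  exact ((hA x).choose_spec.2 a ⟨a.2, h⟩).symm

end Transversal

variable {G X : Type*} [Group G] [MulAction G X]

theorem natCard_stabilizer_eq_of_mem_orbit {x y : X} (h : y ∈ orbit G x) :
    Nat.card (stabilizer G y) = Nat.card (stabilizer G x) :=
  Nat.card_congr (stabilizerEquivStabilizerOfOrbitRel (orbitRel_apply.mpr h)).toEquiv

variable (H : Subgroup G)

def transporterCosets (y x : X) : Set (G ⧸ H) :=
  QuotientGroup.mk '' {g : G | g • y = x}

variable {H}

theorem mk_mem_transporterCosets_iff {y x : X} {g : G} :
    (g : G ⧸ H) ∈ transporterCosets H y x ↔ g⁻¹ • x ∈ orbit H y := by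
  constructor
  · rintro ⟨k, rfl : k • y = x, hk⟩
    have hgk : g⁻¹ * k ∈ H := QuotientGroup.eq.mp hk.symm
    exact ⟨⟨g⁻¹ * k, hgk⟩, mul_smul g⁻¹ k y⟩
  · rintro ⟨h, hh : (h : G) • y = g⁻¹ • x⟩
    refine ⟨g * h, ?_, QuotientGroup.mk_mul_of_mem g h.2⟩
    change (g * h) • y = x
    rw [mul_smul, hh, smul_inv_smul]

theorem transporterCosets_smul (g : G) (y x : X) :
    transporterCosets H y (g • x) = g • transporterCosets H y x := by
  ext c
  obtain ⟨k, rfl⟩ := QuotientGroup.mk_surjective c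
  rw [Set.mem_smul_set_iff_inv_smul_mem, MulAction.Quotient.smul_mk,
    mk_mem_transporterCosets_iff, mk_mem_transporterCosets_iff, smul_eq_mul, mul_inv_rev,
    inv_inv, mul_smul]

theorem subgroup_smul_mk_one {K : Subgroup G} (s : K) :
    s • ((1 : G) : G ⧸ H) = ((s : G) : G ⧸ H) := by
  change (s : G) • ((1 : G) : G ⧸ H) = _
  rw [MulAction.Quotient.smul_mk, smul_eq_mul, mul_one]

theorem transporterCosets_self (y : X) :
    transporterCosets H y y = orbit (stabilizer G y) ((1 : G) : G ⧸ H) := by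
  ext c
  constructor
  · rintro ⟨g, hg, rfl⟩
    exact ⟨⟨g, hg⟩, subgroup_smul_mk_one _⟩
  · rintro ⟨s, rfl⟩
    exact ⟨s, s.2, (subgroup_smul_mk_one s).symm⟩

theorem coe_mem_of_mem_stabilizer_mk_one {y : X} {s : stabilizer G y}
    (hs : s ∈ stabilizer (stabilizer G y) ((1 : G) : G ⧸ H)) : (s : G) ∈ H := by
  rw [mem_stabilizer_iff, subgroup_smul_mk_one, QuotientGroup.eq] at hs
  simpa using hs

def stabilizerCosetOneEquiv (y : X) :
    stabilizer (stabilizer G y) ((1 : G) : G ⧸ H) ≃ stabilizer H y where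
  toFun s := ⟨⟨s, coe_mem_of_mem_stabilizer_mk_one s.2⟩, (s : stabilizer G y).2⟩
  invFun s := ⟨⟨s, s.2⟩, by
    rw [mem_stabilizer_iff, subgroup_smul_mk_one, QuotientGroup.eq]
    simp⟩
  left_inv _ := rfl
  right_inv _ := rfl

theorem natCard_transporterCosets_self_mul (y : X) :
    Nat.card (transporterCosets H y y) * Nat.card (stabilizer H y) =
      Nat.card (stabilizer G y) := by
  rw [transporterCosets_self, Nat.card_coe_set_eq, ← index_stabilizer,
    ← Nat.card_congr (stabilizerCosetOneEquiv (H := H) y), Subgroup.index_mul_card]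

theorem mem_orbit_of_mem_transporterCosets {y x : X} {c : G ⧸ H}
    (hc : c ∈ transporterCosets H y x) : x ∈ orbit G y := by
  obtain ⟨g, hg, -⟩ := hc
  exact ⟨g, hg⟩

theorem natCard_transporterCosets_of_mem_orbit {y x : X} (h : x ∈ orbit G y) :
    Nat.card (transporterCosets H y x) = Nat.card (transporterCosets H y y) := by
  obtain ⟨g, rfl⟩ := h
  rw [transporterCosets_smul, Set.natCard_smul_set]

theorem finite_transporterCosets {y x : X} [Finite (stabilizer G y)] (h : x ∈ orbit G y) :
    (transporterCosets H y x).Finite := by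
  obtain ⟨g, rfl⟩ := h
  rw [transporterCosets_smul, transporterCosets_self]
  exact (Set.finite_range _).smul_set

theorem natCard_stabilizer_subgroup_ne_zero (y : X) [Finite (stabilizer G y)] :
    Nat.card (stabilizer H y) ≠ 0 :=
  right_ne_zero_of_mul (natCard_transporterCosets_self_mul (H := H) y ▸ Nat.card_pos.ne')

section Transversals

variable {A A' : Set X}

noncomputable def cosetOrbitRep (hA' : IsOrbitTransversal H A') (p : (G ⧸ H) × A) : A' :=
  transversalRep hA' (p.1.out⁻¹ • (p.2 : X))

theorem cosetOrbitRep_eq_iff (hA' : IsOrbitTransversal H A') {p : (G ⧸ H) × A} {a' : A'} :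
    cosetOrbitRep hA' p = a' ↔ p.1 ∈ transporterCosets H (a' : X) (p.2 : X) := by
  rw [cosetOrbitRep, transversalRep_eq_iff, mem_orbit_symm, ← mk_mem_transporterCosets_iff,
    QuotientGroup.out_eq']

theorem transversalRep_eq_of_mem_transporterCosets (hA : IsOrbitTransversal G A)
    {y : X} {b : A} {c : G ⧸ H} (hc : c ∈ transporterCosets H y (b : X)) :
    transversalRep hA y = b :=
  (transversalRep_eq_iff hA).mpr (mem_orbit_of_mem_transporterCosets hc)

noncomputable def cosetOrbitRepFiberEquiv (hA : IsOrbitTransversal G A)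
    (hA' : IsOrbitTransversal H A') (a' : A') :
    cosetOrbitRep (A := A) hA' ⁻¹' {a'} ≃
      transporterCosets H (a' : X) (transversalRep hA (a' : X) : X) where
  toFun p := ⟨p.1.1, by
    have hp := (cosetOrbitRep_eq_iff hA').mp p.2
    rwa [transversalRep_eq_of_mem_transporterCosets hA hp]⟩
  invFun c := ⟨(c, transversalRep hA (a' : X)), (cosetOrbitRep_eq_iff hA').mpr c.2⟩
  left_inv p := Subtype.ext <| Prod.ext rfl
    (transversalRep_eq_of_mem_transporterCosets hA ((cosetOrbitRep_eq_iff hA').mp p.2))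
  right_inv _ := rfl

theorem tsum_fiber_cosetOrbitRep (hA : IsOrbitTransversal G A)
    (hA' : IsOrbitTransversal H A') (a' : A') [Finite (stabilizer G (a' : X))] :
    ∑' p : cosetOrbitRep (A := A) hA' ⁻¹' {a'}, (Nat.card (stabilizer G (p.1.2 : X)) : ℝ≥0∞)⁻¹ =
      (Nat.card (stabilizer H (a' : X)) : ℝ≥0∞)⁻¹ := by
  have hstab (p : cosetOrbitRep (A := A) hA' ⁻¹' {a'}) :
      Nat.card (stabilizer G (p.1.2 : X)) = Nat.card (stabilizer G (a' : X)) :=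
    natCard_stabilizer_eq_of_mem_orbit
      (mem_orbit_of_mem_transporterCosets ((cosetOrbitRep_eq_iff hA').mp p.2))
  have hrep : (transversalRep hA (a' : X) : X) ∈ orbit G (a' : X) :=
    (transversalRep_eq_iff hA).mp rfl
  have := (finite_transporterCosets (H := H) hrep).to_subtype
  rw [tsum_congr fun p => by rw [hstab p], ENNReal.tsum_const,
    ENat.card_congr (cosetOrbitRepFiberEquiv hA hA' a'), ENat.card_eq_coe_natCard,
    natCard_transporterCosets_of_mem_orbit hrep, ENat.toENNReal_coe]
  exact ENNReal.natCast_mul_inv_eq_inv_of_mul_eq (natCard_transporterCosets_self_mul _)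
    Nat.card_pos.ne'

theorem tsum_inv_natCard_stabilizer_subgroup (hA : IsOrbitTransversal G A)
    (hA' : IsOrbitTransversal H A') (hfin : ∀ x : X, Finite (stabilizer G x)) :
    ∑' a' : A', (Nat.card (stabilizer H (a' : X)) : ℝ≥0∞)⁻¹ =
      ENat.card (G ⧸ H) * ∑' a : A, (Nat.card (stabilizer G (a : X)) : ℝ≥0∞)⁻¹ := by
  calc ∑' a' : A', (Nat.card (stabilizer H (a' : X)) : ℝ≥0∞)⁻¹
      = ∑' a' : A', ∑' p : cosetOrbitRep (A := A) hA' ⁻¹' {a'},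
          (Nat.card (stabilizer G (p.1.2 : X)) : ℝ≥0∞)⁻¹ :=
        tsum_congr fun a' => have := hfin a'; (tsum_fiber_cosetOrbitRep hA hA' a').symm
    _ = ∑' p : (G ⧸ H) × A, (Nat.card (stabilizer G (p.2 : X)) : ℝ≥0∞)⁻¹ :=
        ENNReal.tsum_fiberwise
          (fun p : (G ⧸ H) × A => (Nat.card (stabilizer G (p.2 : X)) : ℝ≥0∞)⁻¹)
          (cosetOrbitRep hA')
    _ = ENat.card (G ⧸ H) * ∑' a : A, (Nat.card (stabilizer G (a : X)) : ℝ≥0∞)⁻¹ := by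
        rw [ENNReal.tsum_prod']
        exact ENNReal.tsum_const (∑' a : A, (Nat.card (stabilizer G (a : X)) : ℝ≥0∞)⁻¹)

end Transversals

end MulAction

theorem covolume_multiplicative_in_index_general (Γ : Type*) [Group Γ] (X : Type*)
    [MulAction Γ X]
    (hfin : ∀ x : X, Finite (MulAction.stabilizer Γ x))
    (Γ' : Subgroup Γ) (d : ℕ) (hd : Γ'.index = d)
    (A A' : Set X)
    (hA : ∀ x : X, ∃! a, a ∈ A ∧ a ∈ MulAction.orbit Γ x)
    (hA' : ∀ x : X, ∃! a, a ∈ A' ∧ a ∈ MulAction.orbit Γ' x) :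
    ∑' v : A', (1 : ℝ) / Nat.card (MulAction.stabilizer Γ' (v : X)) =
      d * ∑' v : A, (1 : ℝ) / Nat.card (MulAction.stabilizer Γ (v : X)) := by
  have hΓ (x : X) : Nat.card (stabilizer Γ x) ≠ 0 := have := hfin x; Nat.card_pos.ne'
  have hΓ' (x : X) : Nat.card (stabilizer Γ' x) ≠ 0 :=
    have := hfin x; natCard_stabilizer_subgroup_ne_zero x
  rw [← ENNReal.toReal_tsum_inv_natCast fun v : A' => hΓ' v,
    ← ENNReal.toReal_tsum_inv_natCast fun v : A => hΓ v,
    tsum_inv_natCard_stabilizer_subgroup hA hA' hfin, ENNReal.toReal_mul,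
    ENat.toReal_toENNReal_card, ← Subgroup.index_eq_card, hd]

/-- Serre's covolume sum is multiplicative in the index: if `Γ` acts on a set `X` of
cells with finite stabilizers, `Γ' ≤ Γ` has finite index `d`, and `A`, `A'` are sets of
orbit representatives for `Γ`, `Γ'` respectively, then
`Σ_{v ∈ A'} 1/|Γ'_v| = d · Σ_{v ∈ A} 1/|Γ_v|`. -/
theorem covolume_multiplicative_in_index (Γ : Type*) [Group Γ] (X : Type*)
    [MulAction Γ X]
    (hfin : ∀ x : X, Finite (MulAction.stabilizer Γ x))
    (Γ' : Subgroup Γ) (d : ℕ) (hd : Γ'.index = d) (hd0 : d ≠ 0)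
    (A A' : Set X)
    (hA : ∀ x : X, ∃! a, a ∈ A ∧ a ∈ MulAction.orbit Γ x)
    (hA' : ∀ x : X, ∃! a, a ∈ A' ∧ a ∈ MulAction.orbit Γ' x)
    (hsum : Summable fun v : A =>
      (1 : ℝ) / Nat.card (MulAction.stabilizer Γ (v : X))) :
    ∑' v : A', (1 : ℝ) / Nat.card (MulAction.stabilizer Γ' (v : X)) =
      d * ∑' v : A, (1 : ℝ) / Nat.card (MulAction.stabilizer Γ (v : X)) :=
  covolume_multiplicative_in_index_general Γ X hfin Γ' d hd A A' hA hA'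
end
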